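/- Scaling law along Bowen L¹-metrics forces large rate distortion dimension: let (X,T) be a dynamical system with metric d and T-invariant probability measure μ. Suppose there exist s ≥ 0 and δ > 0 such that for every N ≥ 1 and every E ⊂ X with diam(E, d̄_N) < δ one has μ(E) ≤ (diam(E, d̄_N))^{sN}, where d̄_N(x,y) = (1/N)∑_{n=0}^{N-1} d(T^n x, T^n y). Then liminf_{ε→0} R(d,μ,ε)/log(1/ε) ≥ s. -/

import Mathlib

open Set Filter Topology ENNReal MeasureTheory Finset

/-- Diameter of a set with respect to a distance function `d`. -/
noncomputable def diamD {X : Type*} (d : X → X → ℝ) (E : Set X) : ℝ≥0∞ :=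
  ⨆ x ∈ E, ⨆ y ∈ E, ENNReal.ofReal (d x y)

/-- The Bowen `L¹`-metric `d̄_N(x,y) = (1/N)∑_{n<N} d(T^n x, T^n y)`. -/
noncomputable def barDist {X : Type*} [MetricSpace X] (T : X → X) (N : ℕ)
    (x y : X) : ℝ :=
  (1 / (N : ℝ)) * ∑ n ∈ Finset.range N, dist (T^[n] x) (T^[n] y)

/-- Mutual information `I(X;Y) = H(X) + H(Y) − H(X,Y)` (base 2) of a joint pmf on a
product of finite sets. -/
noncomputable def finMI {n m : ℕ} (p : Fin n × Fin m → ℝ) : ℝ :=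
  (-∑ a, (∑ b, p (a, b)) * Real.logb 2 (∑ b, p (a, b))) +
    (-∑ b, (∑ a, p (a, b)) * Real.logb 2 (∑ a, p (a, b))) -
    (-∑ q, p q * Real.logb 2 (p q))

/-- Mutual information of a joint distribution `π` on `A × B`: the supremum over
finite measurable partitions of the discrete mutual information. -/
noncomputable def mutualInfo {A B : Type*} [MeasurableSpace A] [MeasurableSpace B]
    (π : Measure (A × B)) : ℝ≥0∞ :=
  ⨆ (n : ℕ) (m : ℕ) (P : A → Fin n) (_ : Measurable P) (Q : B → Fin m)
    (_ : Measurable Q),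
    ENNReal.ofReal (finMI fun q : Fin n × Fin m =>
      (π {z : A × B | P z.1 = q.1 ∧ Q z.2 = q.2}).toReal)

/-- The rate distortion function `R(d,μ,ε)`. -/
noncomputable def rateDistortion {𝒳 : Type*} [MeasurableSpace 𝒳] (T : 𝒳 → 𝒳)
    (d : 𝒳 → 𝒳 → ℝ) (μ : Measure 𝒳) (ε : ℝ) : ℝ≥0∞ :=
  ⨅ (N : ℕ) (_ : 1 ≤ N) (π : Measure (𝒳 × (Fin N → 𝒳)))
    (_ : IsProbabilityMeasure π) (_ : π.map Prod.fst = μ)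
    (_ : ∫ z, (1 / (N : ℝ)) * ∑ n : Fin N, d (T^[(n : ℕ)] z.1) (z.2 n) ∂π < ε),
    mutualInfo π / (N : ℝ≥0∞)

/-- The log-sum inequality. -/
lemma logSum {ι : Type*} [Fintype ι] (a b : ι → ℝ) (ha : ∀ i, 0 ≤ a i)
    (hb : ∀ i, 0 ≤ b i) (hab : ∀ i, b i = 0 → a i = 0) :
    (∑ i, a i) * Real.log ((∑ i, a i) / (∑ i, b i)) ≤ ∑ i, a i * Real.log (a i / b i) := by
  set A := ∑ i, a i with hA
  set Z := ∑ i, b i with hZ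
  rcases eq_or_lt_of_le (Finset.sum_nonneg fun i _ => hb i) with h0 | hZpos
  · -- Z = 0
    have hb0 : ∀ i, b i = 0 := by
      intro i
      have := (Finset.sum_eq_zero_iff_of_nonneg (fun i _ => hb i)).mp h0.symm
      exact this i (Finset.mem_univ i)
    have ha0 : ∀ i, a i = 0 := fun i => hab i (hb0 i)
    simp [hA, ha0]
  · -- Z > 0
    have hZne : Z ≠ 0 := ne_of_gt hZpos
    have key := Real.convexOn_mul_log.map_sum_le (t := Finset.univ)
      (w := fun i => b i / Z) (p := fun i => a i / b i)
      (fun i _ => div_nonneg (hb i) hZpos.le)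
      (by rw [← Finset.sum_div, div_self hZne])
      (fun i _ => by
        rcases eq_or_ne (b i) 0 with h | h
        · simp [h, hab i h]
        · exact div_nonneg (ha i) (hb i))
    have hsum1 : ∑ i, (b i / Z) • (a i / b i) = A / Z := by
      rw [hA, Finset.sum_div]
      refine Finset.sum_congr rfl fun i _ => ?_
      rcases eq_or_ne (b i) 0 with h | h
      · simp [h, hab i h]
      · rw [smul_eq_mul, div_mul_div_comm, mul_comm (b i) (a i), mul_div_mul_right _ _ h]
    have hsum2 : ∑ i, (b i / Z) • ((a i / b i) * Real.log (a i / b i))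
        = (∑ i, a i * Real.log (a i / b i)) / Z := by
      rw [Finset.sum_div]
      refine Finset.sum_congr rfl fun i _ => ?_
      rcases eq_or_ne (b i) 0 with h | h
      · simp [h, hab i h]
      · rw [smul_eq_mul]; field_simp
    rw [hsum1, hsum2] at key
    have := mul_le_mul_of_nonneg_left key hZpos.le
    calc A * Real.log (A / Z) = Z * (A / Z * Real.log (A / Z)) := by field_simp
      _ ≤ Z * ((∑ i, a i * Real.log (a i / b i)) / Z) := this
      _ = ∑ i, a i * Real.log (a i / b i) := by field_simp


open Set Filter Topology ENNReal MeasureTheory Finset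




lemma finMI_eq {n m : ℕ} (p : Fin n × Fin m → ℝ) :
    finMI p = (∑ q, p q * Real.logb 2 (p q))
      - (∑ q : Fin n × Fin m, p q * Real.logb 2 (∑ b, p (q.1, b)))
      - (∑ q : Fin n × Fin m, p q * Real.logb 2 (∑ a, p (a, q.2))) := by
  have h1 : ∑ q : Fin n × Fin m, p q * Real.logb 2 (∑ b, p (q.1, b))
      = ∑ a, (∑ b, p (a, b)) * Real.logb 2 (∑ b, p (a, b)) := by
    rw [Fintype.sum_prod_type]
    refine Finset.sum_congr rfl fun a _ => ?_
    dsimp only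
    rw [← Finset.sum_mul]
  have h2 : ∑ q : Fin n × Fin m, p q * Real.logb 2 (∑ a, p (a, q.2))
      = ∑ b, (∑ a, p (a, b)) * Real.logb 2 (∑ a, p (a, b)) := by
    rw [Fintype.sum_prod_type_right]
    refine Finset.sum_congr rfl fun b _ => ?_
    dsimp only
    rw [← Finset.sum_mul]
  unfold finMI; rw [h1, h2]; ring

/-- Gibbs / Donsker–Varadhan style lower bound for discrete mutual information. -/
lemma finMI_ge {n m : ℕ} (p : Fin n × Fin m → ℝ) (g : Fin n × Fin m → ℝ)
    (hp : ∀ q, 0 ≤ p q) (hsum : ∑ q, p q = 1) (hg : ∀ q, 0 ≤ g q)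
    (hzero : ∀ q, (∑ b, p (q.1, b)) * (∑ a, p (a, q.2)) * g q = 0 → p q = 0)
    (hZ : ∑ q, (∑ b, p (q.1, b)) * (∑ a, p (a, q.2)) * g q ≤ 2) :
    (∑ q, p q * Real.logb 2 (g q)) - 1 ≤ finMI p := by
  set b : Fin n × Fin m → ℝ := fun q => (∑ b, p (q.1, b)) * (∑ a, p (a, q.2)) * g q with hbdef
  have hbnn : ∀ q, 0 ≤ b q := fun q =>
    mul_nonneg (mul_nonneg (Finset.sum_nonneg fun _ _ => hp _)
      (Finset.sum_nonneg fun _ _ => hp _)) (hg q)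
  -- key identity: finMI p - ∑ p logb g = ∑ p * logb (p/b)
  have hiden : finMI p - (∑ q, p q * Real.logb 2 (g q))
      = ∑ q, p q * Real.logb 2 (p q / b q) := by
    rw [finMI_eq]
    rw [show (∑ q, p q * Real.logb 2 (p q))
      - (∑ q : Fin n × Fin m, p q * Real.logb 2 (∑ b, p (q.1, b)))
      - (∑ q : Fin n × Fin m, p q * Real.logb 2 (∑ a, p (a, q.2)))
      - (∑ q, p q * Real.logb 2 (g q))
      = ∑ q, (p q * Real.logb 2 (p q) - p q * Real.logb 2 (∑ b, p (q.1, b))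
          - p q * Real.logb 2 (∑ a, p (a, q.2)) - p q * Real.logb 2 (g q)) by
        simp [Finset.sum_sub_distrib]]
    refine Finset.sum_congr rfl fun q _ => ?_
    rcases eq_or_ne (p q) 0 with h0 | h0
    · simp [h0]
    · have hrow : (0:ℝ) < ∑ b, p (q.1, b) := by
        have hle : p q ≤ ∑ b, p (q.1, b) := by
          have := Finset.single_le_sum (f := fun b => p (q.1, b))
            (fun i _ => hp _) (Finset.mem_univ q.2)
          simpa using this
        exact lt_of_lt_of_le (lt_of_le_of_ne (hp q) (Ne.symm h0)) hle
      have hcol : (0:ℝ) < ∑ a, p (a, q.2) := by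
        have hle : p q ≤ ∑ a, p (a, q.2) := by
          have := Finset.single_le_sum (f := fun a => p (a, q.2))
            (fun i _ => hp _) (Finset.mem_univ q.1)
          simpa using this
        exact lt_of_lt_of_le (lt_of_le_of_ne (hp q) (Ne.symm h0)) hle
      have hgq : g q ≠ 0 := by
        intro h
        exact h0 (hzero q (by rw [h, mul_zero]))
      have hbne : b q ≠ 0 := by
        simp only [hbdef]
        exact mul_ne_zero (mul_ne_zero hrow.ne' hcol.ne') hgq
      rw [Real.logb_div h0 hbne, hbdef]
      rw [Real.logb_mul (mul_ne_zero hrow.ne' hcol.ne') hgq,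
        Real.logb_mul hrow.ne' hcol.ne']
      ring
  -- log-sum inequality
  have hls := logSum p b hp hbnn (fun q hq => by
    by_contra hne
    exact hne (hzero q hq))
  rw [hsum] at hls
  have hZpos : (0:ℝ) < ∑ q, b q := by
    by_contra hc
    push_neg at hc
    have : ∑ q, b q = 0 := le_antisymm hc (Finset.sum_nonneg fun q _ => hbnn q)
    have hall := (Finset.sum_eq_zero_iff_of_nonneg (fun q _ => hbnn q)).mp this
    have : ∑ q, p q = 0 := Finset.sum_eq_zero fun q _ => by
      by_contra hne
      exact hne (hzero q (hall q (Finset.mem_univ q)))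
    rw [hsum] at this; norm_num at this
  -- convert log to logb and conclude
  have hlog2 : (0:ℝ) < Real.log 2 := Real.log_pos one_lt_two
  have hsum3 : ∑ q, p q * Real.logb 2 (p q / b q)
      = (∑ q, p q * Real.log (p q / b q)) / Real.log 2 := by
    rw [Finset.sum_div]
    refine Finset.sum_congr rfl fun q _ => ?_
    rw [Real.logb]; ring
  have hkey : (-1 : ℝ) ≤ ∑ q, p q * Real.logb 2 (p q / b q) := by
    rw [hsum3]
    have h1 : Real.log (1/2 : ℝ) ≤ Real.log (1 / ∑ q, b q) := by
      apply Real.log_le_log (by norm_num)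
      apply one_div_le_one_div_of_le hZpos hZ
    have h2 : Real.log (1/2 : ℝ) = - Real.log 2 := by
      rw [one_div, Real.log_inv]
    have h3 : (-1 : ℝ) = Real.log (1/2) / Real.log 2 := by
      rw [h2]; field_simp
    rw [h3]
    have h4 : Real.log (1/2) ≤ ∑ q, p q * Real.log (p q / b q) := by
      calc Real.log (1/2) ≤ Real.log (1 / ∑ q, b q) := h1
        _ = 1 * Real.log (1 / ∑ q, b q) := (one_mul _).symm
        _ ≤ ∑ q, p q * Real.log (p q / b q) := hls
    gcongr
  linarith [hiden, hkey]

/-- Finite additivity helper. -/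
lemma toReal_sum_measure {α : Type*} [MeasurableSpace α] (π : Measure α)
    [IsProbabilityMeasure π] {ι : Type*} (C : ι → Set α)
    (hm : ∀ i, MeasurableSet (C i)) (hd : Pairwise (Function.onFun Disjoint C)) (F : Finset ι) :
    ∑ i ∈ F, (π (C i)).toReal = (π (⋃ i ∈ F, C i)).toReal := by
  rw [measure_biUnion_finset (hd.set_pairwise _) (fun i _ => hm i)]
  rw [ENNReal.toReal_sum (fun i _ => measure_ne_top π (C i))]

set_option maxHeartbeats 2000000 in
theorem stepA {X : Type*} [MetricSpace X] [CompactSpace X]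
    [MeasurableSpace X] [BorelSpace X] (T : X ≃ₜ X) (μ : Measure X)
    [IsProbabilityMeasure μ]
    {s δ : ℝ} (hs : 0 ≤ s) (hδ : 0 < δ)
    (hscale : ∀ N : ℕ, 1 ≤ N → ∀ E : Set X,
      diamD (barDist (⇑T) N) E < ENNReal.ofReal δ →
      μ E ≤ diamD (barDist (⇑T) N) E ^ (s * N))
    {ε r : ℝ} (hε : 0 < ε) (hr : 0 < r) (h5r : 5*r < δ) (h5r1 : 5*r ≤ 1) :
    ENNReal.ofReal ((1 - ε/r) * (s * Real.logb 2 (1/(5*r))) - 1)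
      ≤ rateDistortion (⇑T) dist μ ε := by
  classical
  set B' : ℝ := (1 - ε/r) * (s * Real.logb 2 (1/(5*r))) - 1 with hB'
  rcases le_or_gt B' 0 with hB0 | hB0
  · rw [ENNReal.ofReal_eq_zero.mpr hB0]; exact zero_le
  refine le_iInf fun N => le_iInf fun hN => le_iInf fun π => le_iInf fun hπ =>
    le_iInf fun hmap => le_iInf fun hdist => ?_
  have hNpos : (0:ℝ) < N := by exact_mod_cast hN
  -- X is nonempty
  have hXne : Nonempty X := by
    by_contra h
    rw [not_nonempty_iff] at h
    have : μ Set.univ = 1 := measure_univ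
    rw [Set.univ_eq_empty_iff.mpr h] at this
    simp at this
  -- the Y space and auxiliary metric quantities
  set Y := Fin N → X with hY
  set ρ : Y → Y → ℝ := fun u v => (1/(N:ℝ)) * ∑ n : Fin N, dist (u n) (v n) with hρ
  have hρnn : ∀ u v, 0 ≤ ρ u v := fun u v =>
    mul_nonneg (by positivity) (Finset.sum_nonneg fun _ _ => dist_nonneg)
  have hρsymm : ∀ u v, ρ u v = ρ v u := fun u v => by
    simp only [hρ, dist_comm]
  have hρtri : ∀ u v w, ρ u w ≤ ρ u v + ρ v w := fun u v w => by
    simp only [hρ, ← mul_add, ← Finset.sum_add_distrib]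
    apply mul_le_mul_of_nonneg_left _ (by positivity)
    exact Finset.sum_le_sum fun n _ => dist_triangle _ _ _
  have hρ_le_dist : ∀ u v : Y, ρ u v ≤ dist u v := fun u v => by
    simp only [hρ]
    rw [show (1/(N:ℝ)) * ∑ n : Fin N, dist (u n) (v n)
      = (∑ n : Fin N, dist (u n) (v n)) / N by ring]
    rw [div_le_iff₀ hNpos]
    calc ∑ n : Fin N, dist (u n) (v n) ≤ ∑ _n : Fin N, dist u v :=
          Finset.sum_le_sum fun n _ => dist_le_pi_dist u v n
      _ = dist u v * N := by rw [Finset.sum_const, Finset.card_univ, Fintype.card_fin, nsmul_eq_mul, mul_comm]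
  -- orbit map
  set F : X → Y := fun x n => (⇑T)^[(n:ℕ)] x with hF
  have hFcont : Continuous F := continuous_pi fun n => T.continuous.iterate _
  -- a finite (r/2)-net of Y
  obtain ⟨t, ht⟩ := IsCompact.elim_finite_subcover (isCompact_univ (X := Y))
    (fun y : Y => Metric.ball y (r/2)) (fun y => Metric.isOpen_ball)
    (fun y _ => Set.mem_iUnion.mpr ⟨y, Metric.mem_ball_self (by linarith)⟩)
  have hYne : Nonempty Y := ⟨fun _ => Classical.arbitrary X⟩
  set m : ℕ := t.card with hm
  set c : Fin m → Y := fun j => ((t.equivFin.symm j : t) : Y) with hc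
  have hcov : ∀ y : Y, ∃ j : Fin m, dist y (c j) < r/2 := by
    intro y
    have hmem := ht (Set.mem_univ y)
    rw [Set.mem_iUnion₂] at hmem
    obtain ⟨z, hz, hyz⟩ := hmem
    refine ⟨t.equivFin ⟨z, hz⟩, ?_⟩
    have : c (t.equivFin ⟨z, hz⟩) = z := by
      simp only [hc, Equiv.symm_apply_apply]
    rw [this]
    exact Metric.mem_ball.mp hyz
  -- quantizer on Y
  set SQ : Y → Finset (Fin m) := fun y => Finset.univ.filter (fun j => dist y (c j) < r/2)
    with hSQ
  have hSQne : ∀ y, (SQ y).Nonempty := fun y => by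
    obtain ⟨j, hj⟩ := hcov y
    exact ⟨j, by simp [hSQ, hj]⟩
  set Q : Y → Fin m := fun y => (SQ y).min' (hSQne y) with hQdef
  have hQmem : ∀ y, dist y (c (Q y)) < r/2 := fun y => by
    have := Finset.min'_mem (SQ y) (hSQne y)
    simpa [hSQ] using this
  have hQeq : ∀ y j, Q y = j ↔ (dist y (c j) < r/2 ∧ ∀ k, k < j → ¬ dist y (c k) < r/2) := by
    intro y j
    constructor
    · rintro rfl
      refine ⟨hQmem y, fun k hk hdk => ?_⟩
      have hle : Q y ≤ k := Finset.min'_le _ _ (by simp [hSQ, hdk])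
      exact absurd (lt_of_le_of_lt hle hk) (lt_irrefl _)
    · rintro ⟨h1, h2⟩
      have hjmem : j ∈ SQ y := by simp [hSQ, h1]
      have hle : Q y ≤ j := Finset.min'_le _ _ hjmem
      rcases lt_or_eq_of_le hle with hlt | heq
      · exact absurd (hQmem y) (h2 _ hlt)
      · exact heq
  have hQmeas : Measurable Q := by
    apply measurable_to_countable'
    intro j
    have hpre : Q ⁻¹' {j} = Metric.ball (c j) (r/2) ∩
        ⋂ (k : Fin m), ⋂ (_ : k < j), (Metric.ball (c k) (r/2))ᶜ := by
      ext y
      simp only [Set.mem_preimage, Set.mem_singleton_iff, hQeq, Set.mem_inter_iff,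
        Set.mem_iInter, Metric.mem_ball, Set.mem_compl_iff]
    rw [hpre]
    exact (Metric.isOpen_ball.measurableSet).inter
      (MeasurableSet.iInter fun k => MeasurableSet.iInter fun _ =>
        Metric.isOpen_ball.measurableSet.compl)
  set P : X → Fin m := fun x => Q (F x) with hP
  have hPmeas : Measurable P := hQmeas.comp hFcont.measurable
  -- cells of the joint quantization
  set cell : Fin m × Fin m → Set (X × Y) :=
    fun q => {z : X × Y | P z.1 = q.1 ∧ Q z.2 = q.2} with hcell
  have hcellmeas : ∀ q, MeasurableSet (cell q) := by
    intro q
    have h1 : MeasurableSet {z : X × Y | P z.1 = q.1} :=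
      (hPmeas.comp measurable_fst) (measurableSet_singleton q.1)
    have h2 : MeasurableSet {z : X × Y | Q z.2 = q.2} :=
      (hQmeas.comp measurable_snd) (measurableSet_singleton q.2)
    have : cell q = {z : X × Y | P z.1 = q.1} ∩ {z : X × Y | Q z.2 = q.2} := by
      ext z; simp [hcell, Set.mem_inter_iff]
    rw [this]; exact h1.inter h2
  have hcelldisj : Pairwise (Function.onFun Disjoint cell) := by
    intro q q' hqq
    rw [Function.onFun, Set.disjoint_left]
    rintro z ⟨hz1, hz2⟩ ⟨hz1', hz2'⟩
    exact hqq (Prod.ext (hz1 ▸ hz1'.symm ▸ rfl) (hz2 ▸ hz2'.symm ▸ rfl))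
  have hcellself : ∀ z : X × Y, z ∈ cell (P z.1, Q z.2) := fun z => ⟨rfl, rfl⟩
  set p : Fin m × Fin m → ℝ := fun q => (π (cell q)).toReal with hpdef
  have hpnn : ∀ q, 0 ≤ p q := fun q => ENNReal.toReal_nonneg
  have hpsum : ∑ q, p q = 1 := by
    rw [hpdef]
    rw [toReal_sum_measure π cell hcellmeas hcelldisj Finset.univ]
    have : ⋃ q ∈ Finset.univ, cell q = Set.univ := by
      ext z
      simp only [Set.mem_iUnion, Set.mem_univ, iff_true]
      exact ⟨(P z.1, Q z.2), Finset.mem_univ _, hcellself z⟩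
    rw [this, measure_univ, ENNReal.toReal_one]
  -- rows are marginals w.r.t. μ
  have hPdisj : Pairwise (Function.onFun Disjoint fun i : Fin m => P ⁻¹' {i}) := by
    intro i i' hii
    rw [Function.onFun, Set.disjoint_left]
    rintro x hx hx'
    exact hii (by rw [← Set.mem_singleton_iff.mp hx, ← Set.mem_singleton_iff.mp hx'])
  have hrow : ∀ i, (∑ j, p (i, j)) = (μ (P ⁻¹' {i})).toReal := by
    intro i
    rw [hpdef]
    rw [toReal_sum_measure π (fun j => cell (i, j))
      (fun j => hcellmeas (i, j))
      (fun j j' hjj => by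
        have := hcelldisj (show ((i,j) : Fin m × Fin m) ≠ (i, j') by
          simp [Prod.ext_iff, hjj])
        exact this) Finset.univ]
    have huni : ⋃ j ∈ Finset.univ, cell (i, j) = Prod.fst ⁻¹' (P ⁻¹' {i}) := by
      ext z
      simp only [Set.mem_iUnion, Set.mem_preimage, Set.mem_singleton_iff]
      constructor
      · rintro ⟨j, _, hj1, _⟩; exact hj1
      · intro h; exact ⟨Q z.2, Finset.mem_univ _, h, rfl⟩
    rw [huni, ← Measure.map_apply measurable_fst (hPmeas (measurableSet_singleton i)), hmap]
  -- the sets A j and their measure bound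
  set S : Fin m → Finset (Fin m) :=
    fun j => Finset.univ.filter (fun i => ρ (c i) (c j) < 2*r) with hS
  set A : Fin m → Set X := fun j => ⋃ i ∈ S j, P ⁻¹' {i} with hA
  have hAmeas : ∀ j, MeasurableSet (A j) := fun j =>
    MeasurableSet.biUnion (Finset.countable_toSet _)
      (fun i _ => hPmeas (measurableSet_singleton i))
  have hwsum : ∀ j, ∑ i ∈ S j, (∑ j', p (i, j')) = (μ (A j)).toReal := by
    intro j
    rw [Finset.sum_congr rfl (fun i _ => hrow i)]
    rw [toReal_sum_measure μ (fun i => P ⁻¹' {i})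
      (fun i => hPmeas (measurableSet_singleton i)) hPdisj (S j)]
  have hAρ : ∀ j, ∀ x ∈ A j, ρ (F x) (c j) < 5*r/2 := by
    intro j x hx
    rw [hA] at hx
    simp only [Set.mem_iUnion, Set.mem_preimage, Set.mem_singleton_iff] at hx
    obtain ⟨i, hiS, hPx⟩ := hx
    rw [hS] at hiS
    simp only [Finset.mem_filter, Finset.mem_univ, true_and] at hiS
    have h1 : ρ (F x) (c i) < r/2 := by
      rw [← hPx]
      exact lt_of_le_of_lt (hρ_le_dist _ _) (hQmem (F x))
    calc ρ (F x) (c j) ≤ ρ (F x) (c i) + ρ (c i) (c j) := hρtri _ _ _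
      _ < r/2 + 2*r := by linarith
      _ = 5*r/2 := by ring
  have hbar : ∀ x y : X, barDist (⇑T) N x y = ρ (F x) (F y) := by
    intro x y
    simp only [barDist, hρ, hF]
    rw [← Fin.sum_univ_eq_sum_range]
  have hdiamA : ∀ j, diamD (barDist (⇑T) N) (A j) ≤ ENNReal.ofReal (5*r) := by
    intro j
    refine iSup_le fun x => iSup_le fun hx => iSup_le fun y => iSup_le fun hy => ?_
    apply ENNReal.ofReal_le_ofReal
    rw [hbar]
    calc ρ (F x) (F y) ≤ ρ (F x) (c j) + ρ (c j) (F y) := hρtri _ _ _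
      _ = ρ (F x) (c j) + ρ (F y) (c j) := by rw [hρsymm (c j) (F y)]
      _ ≤ 5*r/2 + 5*r/2 := add_le_add (hAρ j x hx).le (hAρ j y hy).le
      _ = 5*r := by ring
  have hwbound : ∀ j, (μ (A j)).toReal ≤ (5*r) ^ (s * (N:ℝ)) := by
    intro j
    have h5rpos : (0:ℝ) < 5*r := by linarith
    have h1 : diamD (barDist (⇑T) N) (A j) < ENNReal.ofReal δ :=
      lt_of_le_of_lt (hdiamA j) ((ENNReal.ofReal_lt_ofReal_iff hδ).mpr h5r)
    have h2 := hscale N hN (A j) h1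
    have h3 : diamD (barDist (⇑T) N) (A j) ^ (s * (N:ℝ))
        ≤ ENNReal.ofReal ((5*r) ^ (s * (N:ℝ))) := by
      rw [← ENNReal.ofReal_rpow_of_pos h5rpos]
      exact ENNReal.rpow_le_rpow (hdiamA j) (by positivity)
    exact ENNReal.toReal_le_of_le_ofReal (Real.rpow_nonneg h5rpos.le _) (h2.trans h3)
  -- the good event and Markov's inequality
  set fdist : X × Y → ℝ :=
    fun z => (1/(N:ℝ)) * ∑ n : Fin N, dist ((⇑T)^[(n:ℕ)] z.1) (z.2 n) with hfd
  have hfdeq : ∀ z : X × Y, fdist z = ρ (F z.1) z.2 := fun z => rfl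
  have hfcont : Continuous fdist := by
    apply Continuous.mul continuous_const
    apply continuous_finset_sum
    intro n _
    exact Continuous.dist ((T.continuous.iterate _).comp continuous_fst)
      ((continuous_apply (n : Fin N)).comp continuous_snd)
  have hfnn : ∀ z, 0 ≤ fdist z := fun z => by rw [hfdeq]; exact hρnn _ _
  obtain ⟨C, hC⟩ := Metric.isBounded_iff.mp (isCompact_univ (X := X)).isBounded
  have hCnn : 0 ≤ C := le_trans dist_nonneg
    (hC (Set.mem_univ (Classical.arbitrary X)) (Set.mem_univ (Classical.arbitrary X)))
  have hfbound : ∀ z, ‖fdist z‖ ≤ C := by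
    intro z
    rw [Real.norm_eq_abs, abs_of_nonneg (hfnn z), hfd]
    have h1 : ∑ n : Fin N, dist ((⇑T)^[(n:ℕ)] z.1) (z.2 n) ≤ ∑ _n : Fin N, C :=
      Finset.sum_le_sum fun n _ => hC (Set.mem_univ _) (Set.mem_univ _)
    have h2 : ∑ _n : Fin N, C = N * C := by
      rw [Finset.sum_const, Finset.card_univ, Fintype.card_fin, nsmul_eq_mul]
    calc (1/(N:ℝ)) * ∑ n : Fin N, dist ((⇑T)^[(n:ℕ)] z.1) (z.2 n)
        ≤ (1/(N:ℝ)) * ((N:ℝ) * C) := by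
          apply mul_le_mul_of_nonneg_left _ (by positivity)
          rw [← h2]; exact h1
      _ = C := by field_simp
  have hint : Integrable fdist π :=
    MeasureTheory.Integrable.mono' (integrable_const C)
      hfcont.aestronglyMeasurable (Filter.Eventually.of_forall hfbound)
  have hintlt : ∫ z, fdist z ∂π < ε := hdist
  set G : Set (X × Y) := {z | fdist z < r} with hG
  have hGmeas : MeasurableSet G := hfcont.measurable measurableSet_Iio
  have hmarkov : (π Gᶜ).toReal ≤ ε / r := by
    have hGc : Gᶜ = {z | r ≤ fdist z} := by
      ext z; simp [hG, not_lt]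
    have hm := mul_meas_ge_le_integral_of_nonneg
      (Filter.Eventually.of_forall hfnn) hint r
    rw [hGc, le_div_iff₀ hr]
    have : (π {z | r ≤ fdist z}).toReal * r = r * (π {z | r ≤ fdist z}).toReal := by ring
    rw [this]
    exact le_of_lt (lt_of_le_of_lt hm hintlt)
  have hGgood : 1 - ε / r ≤ (π G).toReal := by
    have hcompl := measure_add_measure_compl (μ := π) hGmeas
    rw [measure_univ] at hcompl
    have h1 : (π G).toReal + (π Gᶜ).toReal = 1 := by
      rw [← ENNReal.toReal_add (measure_ne_top _ _) (measure_ne_top _ _), hcompl,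
        ENNReal.toReal_one]
    linarith
  -- the weight function g and hypotheses of finMI_ge
  set g : Fin m × Fin m → ℝ :=
    fun q => if q.1 ∈ S q.2 then ((μ (A q.2)).toReal)⁻¹ else 1 with hgdef
  have hgnn : ∀ q, 0 ≤ g q := fun q => by
    rw [hgdef]
    dsimp only
    split
    · exact inv_nonneg.mpr ENNReal.toReal_nonneg
    · norm_num
  have hrowmem : ∀ q : Fin m × Fin m, p q ≤ ∑ b, p (q.1, b) := fun q => by
    have := Finset.single_le_sum (f := fun b => p (q.1, b))
      (fun b _ => hpnn _) (Finset.mem_univ q.2)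
    simpa using this
  have hcolmem : ∀ q : Fin m × Fin m, p q ≤ ∑ a, p (a, q.2) := fun q => by
    have := Finset.single_le_sum (f := fun a => p (a, q.2))
      (fun a _ => hpnn _) (Finset.mem_univ q.1)
    simpa using this
  have hrowW : ∀ q : Fin m × Fin m, q.1 ∈ S q.2 →
      (∑ b, p (q.1, b)) ≤ (μ (A q.2)).toReal := by
    intro q hq
    rw [← hwsum q.2]
    exact Finset.single_le_sum
      (fun i _ => Finset.sum_nonneg fun _ _ => hpnn _) hq
  have hrowsum : ∑ i, ∑ b, p (i, b) = 1 := by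
    rw [← Fintype.sum_prod_type]; exact hpsum
  have hcolsum : ∑ j, ∑ a, p (a, j) = 1 := by
    rw [← Fintype.sum_prod_type_right]; exact hpsum
  have hzero : ∀ q, (∑ b, p (q.1, b)) * (∑ a, p (a, q.2)) * g q = 0 → p q = 0 := by
    intro q h
    rcases mul_eq_zero.mp h with h' | hg0
    · rcases mul_eq_zero.mp h' with h0 | h0
      · exact le_antisymm ((hrowmem q).trans_eq h0) (hpnn q)
      · exact le_antisymm ((hcolmem q).trans_eq h0) (hpnn q)
    · by_cases hqS : q.1 ∈ S q.2
      · rw [hgdef] at hg0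
        dsimp only at hg0
        rw [if_pos hqS, inv_eq_zero] at hg0
        have h1 : ∑ b, p (q.1, b) ≤ 0 := (hrowW q hqS).trans_eq hg0
        exact le_antisymm ((hrowmem q).trans h1) (hpnn q)
      · rw [hgdef] at hg0
        dsimp only at hg0
        rw [if_neg hqS] at hg0
        norm_num at hg0
  have hZb : ∑ q, (∑ b, p (q.1, b)) * (∑ a, p (a, q.2)) * g q ≤ 2 := by
    have hre : ∑ q : Fin m × Fin m, (∑ b, p (q.1, b)) * (∑ a, p (a, q.2)) * g q
        = ∑ j, ∑ i, (∑ b, p (i, b)) * (∑ a, p (a, j)) * g (i, j) := by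
      rw [Fintype.sum_prod_type_right]
    rw [hre]
    have hinner : ∀ j, ∑ i, (∑ b, p (i, b)) * (∑ a, p (a, j)) * g (i, j)
        ≤ (∑ a, p (a, j)) * 2 := by
      intro j
      have hcolnn : 0 ≤ ∑ a, p (a, j) := Finset.sum_nonneg fun _ _ => hpnn _
      have hsplit : ∑ i, (∑ b, p (i, b)) * (∑ a, p (a, j)) * g (i, j)
          = (∑ a, p (a, j)) * ∑ i, (∑ b, p (i, b)) * g (i, j) := by
        rw [Finset.mul_sum]
        exact Finset.sum_congr rfl fun i _ => by ring
      rw [hsplit]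
      apply mul_le_mul_of_nonneg_left _ hcolnn
      rw [← Finset.sum_filter_add_sum_filter_not Finset.univ (fun i => i ∈ S j)]
      have hpart1 : ∑ i ∈ Finset.univ.filter (fun i => i ∈ S j),
          (∑ b, p (i, b)) * g (i, j) ≤ 1 := by
        rw [Finset.filter_univ_mem]
        have hcg : ∀ i ∈ S j, (∑ b, p (i, b)) * g (i, j)
            = (∑ b, p (i, b)) * ((μ (A j)).toReal)⁻¹ := by
          intro i hi
          rw [hgdef]
          dsimp only
          rw [if_pos hi]
        rw [Finset.sum_congr rfl hcg, ← Finset.sum_mul, hwsum j]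
        rcases eq_or_ne ((μ (A j)).toReal) 0 with h0 | h0
        · rw [h0]; simp
        · rw [mul_inv_cancel₀ h0]
      have hpart2 : ∑ i ∈ Finset.univ.filter (fun i => ¬ i ∈ S j),
          (∑ b, p (i, b)) * g (i, j) ≤ 1 := by
        have hcg : ∀ i ∈ Finset.univ.filter (fun i => ¬ i ∈ S j),
            (∑ b, p (i, b)) * g (i, j) = ∑ b, p (i, b) := by
          intro i hi
          rw [Finset.mem_filter] at hi
          rw [hgdef]
          dsimp only
          rw [if_neg hi.2, mul_one]
        rw [Finset.sum_congr rfl hcg]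
        calc ∑ i ∈ Finset.univ.filter (fun i => ¬ i ∈ S j), ∑ b, p (i, b)
            ≤ ∑ i, ∑ b, p (i, b) :=
              Finset.sum_le_sum_of_subset_of_nonneg (Finset.filter_subset _ _)
                (fun i _ _ => Finset.sum_nonneg fun _ _ => hpnn _)
          _ = 1 := hrowsum
      linarith
    calc ∑ j, ∑ i, (∑ b, p (i, b)) * (∑ a, p (a, j)) * g (i, j)
        ≤ ∑ j, (∑ a, p (a, j)) * 2 := Finset.sum_le_sum fun j _ => hinner j
      _ = 2 := by rw [← Finset.sum_mul, hcolsum, one_mul]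
  -- the main lower bound on ∑ p·log g
  set Lb : ℝ := s * (N:ℝ) * Real.logb 2 (1/(5*r)) with hLb
  have h5rpos : (0:ℝ) < 5*r := by linarith
  have hlog5r : 0 ≤ Real.logb 2 (1/(5*r)) := by
    apply Real.logb_nonneg one_lt_two
    rw [le_div_iff₀ h5rpos]; linarith
  have hLbnn : 0 ≤ Lb := by
    rw [hLb]
    exact mul_nonneg (mul_nonneg hs (Nat.cast_nonneg N)) hlog5r
  have hterm : ∀ q ∈ Finset.univ.filter (fun q : Fin m × Fin m => q.1 ∈ S q.2),
      p q * Lb ≤ p q * Real.logb 2 (g q) := by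
    intro q hq
    rw [Finset.mem_filter] at hq
    rcases eq_or_lt_of_le (hpnn q) with h0 | h0
    · rw [← h0]; simp
    · have hw_pos : 0 < (μ (A q.2)).toReal :=
        lt_of_lt_of_le h0 ((hrowmem q).trans (hrowW q hq.2))
      have hw_le : (μ (A q.2)).toReal ≤ (5*r) ^ (s * (N:ℝ)) := hwbound q.2
      have hglq : Real.logb 2 (g q) = - Real.logb 2 ((μ (A q.2)).toReal) := by
        rw [hgdef]
        dsimp only
        rw [if_pos hq.2, Real.logb_inv]
      have hlogle : Real.logb 2 ((μ (A q.2)).toReal)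
          ≤ Real.logb 2 ((5*r) ^ (s * (N:ℝ))) :=
        Real.logb_le_logb_of_le one_lt_two hw_pos hw_le
      have hrpoweq : Real.logb 2 ((5*r) ^ (s * (N:ℝ)))
          = (s * (N:ℝ)) * Real.logb 2 (5*r) :=
        Real.logb_rpow_eq_mul_logb_of_pos h5rpos
      have l5 : Real.logb 2 (1/(5*r)) = - Real.logb 2 (5*r) := by
        rw [one_div, Real.logb_inv]
      have hLbg : Lb ≤ Real.logb 2 (g q) := by
        rw [hglq, hLb, l5]
        rw [hrpoweq] at hlogle
        nlinarith [hlogle]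
      exact mul_le_mul_of_nonneg_left hLbg h0.le
  have hz0 : ∑ q ∈ Finset.univ.filter (fun q : Fin m × Fin m => ¬ q.1 ∈ S q.2),
      p q * Real.logb 2 (g q) = 0 := by
    apply Finset.sum_eq_zero
    intro q hq
    rw [Finset.mem_filter] at hq
    rw [hgdef]
    dsimp only
    rw [if_neg hq.2, Real.logb_one, mul_zero]
  -- mass of the good pairs
  have hM : 1 - ε/r ≤ ∑ q ∈ Finset.univ.filter
      (fun q : Fin m × Fin m => q.1 ∈ S q.2), p q := by
    rw [hpdef]
    rw [toReal_sum_measure π cell hcellmeas hcelldisj]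
    refine le_trans hGgood (ENNReal.toReal_mono (measure_ne_top _ _) (measure_mono ?_))
    intro z hz
    have hzG : fdist z < r := hz
    have h1 : ρ (c (P z.1)) (F z.1) < r/2 := by
      rw [hρsymm]
      exact lt_of_le_of_lt (hρ_le_dist _ _) (hQmem (F z.1))
    have h2 : ρ (F z.1) z.2 < r := by rw [← hfdeq]; exact hzG
    have h3 : ρ z.2 (c (Q z.2)) < r/2 :=
      lt_of_le_of_lt (hρ_le_dist _ _) (hQmem z.2)
    have hSmem : P z.1 ∈ S (Q z.2) := by
      rw [hS]
      simp only [Finset.mem_filter, Finset.mem_univ, true_and]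
      calc ρ (c (P z.1)) (c (Q z.2))
          ≤ ρ (c (P z.1)) (F z.1) + ρ (F z.1) (c (Q z.2)) := hρtri _ _ _
        _ ≤ ρ (c (P z.1)) (F z.1) + (ρ (F z.1) z.2 + ρ z.2 (c (Q z.2))) :=
            add_le_add_right (hρtri _ _ _) _
        _ < r/2 + (r + r/2) := by linarith
        _ = 2*r := by ring
    rw [Set.mem_iUnion₂]
    exact ⟨(P z.1, Q z.2), by simpa using hSmem, hcellself z⟩
  have hmain : (1 - ε/r) * Lb ≤ ∑ q, p q * Real.logb 2 (g q) := by
    have hMnn := hM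
    calc (1 - ε/r) * Lb
        ≤ (∑ q ∈ Finset.univ.filter (fun q : Fin m × Fin m => q.1 ∈ S q.2), p q) * Lb :=
          mul_le_mul_of_nonneg_right hM hLbnn
      _ = ∑ q ∈ Finset.univ.filter (fun q : Fin m × Fin m => q.1 ∈ S q.2), p q * Lb := by
          rw [Finset.sum_mul]
      _ ≤ ∑ q ∈ Finset.univ.filter (fun q : Fin m × Fin m => q.1 ∈ S q.2),
            p q * Real.logb 2 (g q) := Finset.sum_le_sum hterm
      _ = ∑ q, p q * Real.logb 2 (g q) := by
          rw [← Finset.sum_filter_add_sum_filter_not Finset.univ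
            (fun q : Fin m × Fin m => q.1 ∈ S q.2) (fun q => p q * Real.logb 2 (g q)), hz0,
            add_zero]
  -- conclude via finMI_ge
  have hfinMI : (1 - ε/r) * Lb - 1 ≤ finMI p := by
    have := finMI_ge p g hpnn hpsum hgnn hzero hZb
    linarith
  have hN1 : (1:ℝ) ≤ (N:ℝ) := by exact_mod_cast hN
  have hNB : (N:ℝ) * B' ≤ finMI p := by
    have heq : (N:ℝ) * B' = (1 - ε/r) * Lb - (N:ℝ) := by
      rw [hB', hLb]; ring
    rw [heq]
    linarith
  -- final ENNReal manipulations
  have hfinle : ENNReal.ofReal (finMI p) ≤ mutualInfo π := by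
    apply le_iSup_of_le m
    apply le_iSup_of_le m
    apply le_iSup_of_le P
    apply le_iSup_of_le hPmeas
    apply le_iSup_of_le Q
    apply le_iSup_of_le hQmeas
    exact le_of_eq rfl
  have hN0 : ((N:ℕ) : ℝ≥0∞) ≠ 0 := Nat.cast_ne_zero.mpr (by omega)
  rw [ENNReal.le_div_iff_mul_le (Or.inl hN0) (Or.inl (ENNReal.natCast_ne_top N))]
  calc ENNReal.ofReal B' * (N:ℝ≥0∞)
      = ENNReal.ofReal (B' * (N:ℝ)) := by
        rw [ENNReal.ofReal_mul hB0.le, ENNReal.ofReal_natCast]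
    _ ≤ ENNReal.ofReal (finMI p) :=
        ENNReal.ofReal_le_ofReal (by linarith)
    _ ≤ mutualInfo π := hfinle


set_option maxHeartbeats 1000000 in
/-- scaling law along Bowen `L¹`-metrics forces large rate distortion
dimension: if `μ(E) ≤ (diam(E,d̄_N))^{sN}` for all `N ≥ 1` and all `E` with
`diam(E,d̄_N) < δ`, then the lower rate distortion dimension
`liminf_{ε→0} R(d,μ,ε)/log(1/ε)` is at least `s`. -/
theorem statement17 {X : Type*} [MetricSpace X] [CompactSpace X]
    [MeasurableSpace X] [BorelSpace X] (T : X ≃ₜ X) (μ : Measure X)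
    [IsProbabilityMeasure μ] (hinv : MeasurePreserving (⇑T) μ μ)
    {s δ : ℝ} (hs : 0 ≤ s) (hδ : 0 < δ)
    (hscale : ∀ N : ℕ, 1 ≤ N → ∀ E : Set X,
      diamD (barDist (⇑T) N) E < ENNReal.ofReal δ →
      μ E ≤ diamD (barDist (⇑T) N) E ^ (s * N)) :
    ENNReal.ofReal s ≤
      Filter.liminf (fun ε : ℝ =>
          rateDistortion (⇑T) dist μ ε / ENNReal.ofReal (Real.logb 2 (1 / ε)))
        (nhdsWithin 0 (Set.Ioi 0)) := by
  rcases eq_or_lt_of_le hs with hs0 | hspos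
  · rw [← hs0, ENNReal.ofReal_zero]; exact zero_le
  apply le_of_forall_lt_imp_le_of_dense
  intro b hb
  have hbne : b ≠ ⊤ := hb.ne_top
  set s₀ := b.toReal with hs₀def
  have hs₀ : s₀ < s := by
    have := (ENNReal.toReal_lt_toReal hbne ENNReal.ofReal_ne_top).mpr hb
    rwa [ENNReal.toReal_ofReal hs] at this
  have hs₀nn : 0 ≤ s₀ := ENNReal.toReal_nonneg
  have hble : b = ENNReal.ofReal s₀ := (ENNReal.ofReal_toReal hbne).symm
  rw [hble]
  -- choice of constants
  set K : ℝ := s / (s - s₀) + 1 with hK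
  have hss₀ : 0 < s - s₀ := by linarith
  have hKpos : 0 < K := by positivity
  have hK1 : 1 < K := by
    have : 0 < s / (s - s₀) := div_pos hspos hss₀
    rw [hK]; linarith
  set α : ℝ := (1 - 1/K) * s - s₀ with hα
  have hαpos : 0 < α := by
    have h1 : s / K < s - s₀ := by
      rw [div_lt_iff₀ hKpos, hK]
      have h2 : (s - s₀) * (s / (s - s₀) + 1) = s + (s - s₀) := by field_simp
      rw [h2]; linarith
    have h3 : (1 - 1/K) * s = s - s/K := by field_simp
    rw [hα, h3]; linarith
  have h5K1 : (1:ℝ) ≤ 5*K := by linarith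
  have hlog5K : 0 ≤ Real.logb 2 (5*K) := Real.logb_nonneg one_lt_two h5K1
  set C : ℝ := (1 - 1/K) * s * Real.logb 2 (5*K) + 1 with hC
  have hCpos : 0 < C := by
    have h1 : 0 ≤ (1 - 1/K) * s := by
      apply mul_nonneg _ hs
      have : 1/K < 1 := by rw [div_lt_one hKpos]; exact hK1
      linarith
    rw [hC]; nlinarith
  set ε₀ : ℝ := min (δ/(5*K)) (min ((5*K)⁻¹) (min 1 (((2:ℝ)^(C/α))⁻¹))) with hε₀
  have h2CA : (0:ℝ) < (2:ℝ)^(C/α) := Real.rpow_pos_of_pos (by norm_num) _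
  have hε₀pos : 0 < ε₀ := by
    rw [hε₀]
    refine lt_min (by positivity) (lt_min (by positivity) (lt_min one_pos (by positivity)))
  apply le_liminf_of_le ⟨⊤, fun a _ => le_top⟩
  have hmem : Set.Ioo (0:ℝ) ε₀ ∈ 𝓝[>] (0:ℝ) :=
    Ioo_mem_nhdsGT_of_mem ⟨le_refl 0, hε₀pos⟩
  filter_upwards [hmem] with ε hεm
  obtain ⟨hε1, hε2⟩ := hεm
  have hεδ : ε < δ/(5*K) := lt_of_lt_of_le hε2 (by rw [hε₀]; exact min_le_left _ _)
  have hεK : ε < (5*K)⁻¹ :=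
    lt_of_lt_of_le hε2 (by rw [hε₀]; exact le_trans (min_le_right _ _) (min_le_left _ _))
  have hεone : ε < 1 := lt_of_lt_of_le hε2 (by
    rw [hε₀]
    exact le_trans (min_le_right _ _) (le_trans (min_le_right _ _) (min_le_left _ _)))
  have hεC : ε < ((2:ℝ)^(C/α))⁻¹ := lt_of_lt_of_le hε2 (by
    rw [hε₀]
    exact le_trans (min_le_right _ _) (le_trans (min_le_right _ _) (min_le_right _ _)))
  -- apply stepA with r = K * ε
  have hr : 0 < K * ε := mul_pos hKpos hε1
  have h5r : 5*(K*ε) < δ := by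
    rw [lt_div_iff₀ (by positivity)] at hεδ
    nlinarith
  have h5r1 : 5*(K*ε) ≤ 1 := by
    have h1 : (5*K)*ε < (5*K)*(5*K)⁻¹ := mul_lt_mul_of_pos_left hεK (by positivity)
    rw [mul_inv_cancel₀ (by positivity : (5*K:ℝ) ≠ 0)] at h1
    nlinarith
  have hstep := stepA T μ hs hδ hscale hε1 hr h5r h5r1
  -- identify the bound
  set L : ℝ := Real.logb 2 (1/ε) with hL
  have hLpos : 0 < L := by
    rw [hL]
    apply Real.logb_pos one_lt_two
    rw [lt_div_iff₀ hε1]; linarith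
  have hLC : C/α ≤ L := by
    have h1 : (2:ℝ)^(C/α) < 1/ε := by
      have := one_div_lt_one_div_of_lt hε1 hεC
      rwa [one_div (((2:ℝ)^(C/α))⁻¹), inv_inv] at this
    rw [hL]
    calc C/α = Real.logb 2 ((2:ℝ)^(C/α)) := (Real.logb_rpow (by norm_num) (by norm_num)).symm
      _ ≤ Real.logb 2 (1/ε) := Real.logb_le_logb_of_le one_lt_two h2CA h1.le
  have hkey : s₀ * L ≤ (1 - ε/(K*ε)) * (s * Real.logb 2 (1/(5*(K*ε)))) - 1 := by
    have hεne : ε ≠ 0 := hε1.ne'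
    have hdiv : ε/(K*ε) = 1/K := by rw [mul_comm K ε]; field_simp
    have hlogsplit : Real.logb 2 (1/(5*(K*ε))) = L - Real.logb 2 (5*K) := by
      rw [hL]
      have h1 : (1:ℝ)/(5*(K*ε)) = (1/ε)/(5*K) := by field_simp
      rw [h1, Real.logb_div (by positivity) (by positivity)]
    rw [hdiv, hlogsplit]
    have hαL : C ≤ α * L := by
      rw [← div_le_iff₀' hαpos]
      exact hLC
    rw [hα] at hαL
    rw [hC] at hαL
    nlinarith [hαL]
  -- final ENNReal computation
  have hofles : ENNReal.ofReal (s₀ * L) ≤ rateDistortion (⇑T) dist μ ε :=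
    le_trans (ENNReal.ofReal_le_ofReal hkey) hstep
  have hLne : ENNReal.ofReal L ≠ 0 := by
    rw [Ne, ENNReal.ofReal_eq_zero, not_le]; exact hLpos
  rw [ENNReal.le_div_iff_mul_le (Or.inl hLne) (Or.inl ENNReal.ofReal_ne_top)]
  calc ENNReal.ofReal s₀ * ENNReal.ofReal L = ENNReal.ofReal (s₀ * L) :=
      (ENNReal.ofReal_mul hs₀nn).symm
    _ ≤ rateDistortion (⇑T) dist μ ε := hofles
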